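/- Let b, c be real numbers with 0 ≤ b < c, set ω := √(c² − b²), let W₋ := W₋(b,c) and T₋ := W₋/ω. Let T₁ < T be real numbers and let ρ : [T₁, T] → ℝ be twice continuously differentiable with ρ(T₁) > 0 and ρ'(T₁) = 0, such that ρ(τ) > 0 for all τ ∈ [T₁, T), and ρ''(τ) − 2b·ρ'(τ) + c²·ρ(τ) ≥ 0 for all τ ∈ [T₁, T]. Then ρ(τ) ≥ ρ(T₁)·(c/ω)·e^{b·(τ−T₁)}·sin(ω·(T₁ + T₋ − τ)) for all τ ∈ [T₁, min(T, T₁ + T₋)]; in particular, if ρ(T) = 0 then T ≥ T₁ + T₋. -/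

import Mathlib

open Real Set

/-!
The comparison function `u(τ) = e^{b(τ-T₁)} sin(ω(T₁ + T₋ - τ))` solves
`u'' - 2b u' + c² u = 0` (because `c² = b² + ω²`), is positive on `[T₁, T₁ + T₋)`, and has
`u(T₁) = sin W₋ = ω/c`, `u'(T₁) = b sin W₋ - ω cos W₋ = 0`. For a supersolution `ρ` the
Wronskian `W = u ρ' - u' ρ` satisfies `(e^{-2bτ} W)' = e^{-2bτ} u (ρ'' - 2bρ' + c²ρ) ≥ 0` and
`W(T₁) = 0`, so `W ≥ 0`. Hence `(ρ/u)' = W/u² ≥ 0`, and `ρ ≥ (ρ(T₁)/u(T₁)) u` on `[T₁, T₁ + T₋)`,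
which extends to the right endpoint by continuity. If `ρ(T) = 0` with `T < T₁ + T₋`, this
contradicts `u(T) > 0`.
-/

def wronskian (f f' g g' : ℝ → ℝ) (t : ℝ) : ℝ := f t * g' t - f' t * g t

section Wronskian

variable {s : Set ℝ} {a m x : ℝ} {f f' f'' ρ ρ' ρ'' : ℝ → ℝ}

theorem HasDerivWithinAt.wronskian (hf : HasDerivWithinAt f (f' x) s x)
    (hf' : HasDerivWithinAt f' (f'' x) s x) (hρ : HasDerivWithinAt ρ (ρ' x) s x)
    (hρ' : HasDerivWithinAt ρ' (ρ'' x) s x) :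
    HasDerivWithinAt (wronskian f f' ρ ρ') (f x * ρ'' x - f'' x * ρ x) s x :=
  ((hf.mul hρ').sub (hf'.mul hρ)).congr_deriv (by ring)

theorem wronskian_nonneg_of_supersolution {b : ℝ} {q : ℝ → ℝ}
    (hf : ∀ x ∈ Icc a m, HasDerivWithinAt f (f' x) (Icc a m) x)
    (hf' : ∀ x ∈ Icc a m, HasDerivWithinAt f' (f'' x) (Icc a m) x)
    (hρ : ∀ x ∈ Icc a m, HasDerivWithinAt ρ (ρ' x) (Icc a m) x)
    (hρ' : ∀ x ∈ Icc a m, HasDerivWithinAt ρ' (ρ'' x) (Icc a m) x)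
    (hsol : ∀ x ∈ Icc a m, f'' x - 2 * b * f' x + q x * f x = 0)
    (hsuper : ∀ x ∈ Ioo a m, 0 ≤ ρ'' x - 2 * b * ρ' x + q x * ρ x)
    (hf_nonneg : ∀ x ∈ Ioo a m, 0 ≤ f x) (h₀ : 0 ≤ wronskian f f' ρ ρ' a) :
    ∀ x ∈ Icc a m, 0 ≤ wronskian f f' ρ ρ' x := by
  set E := fun t => exp (-(2 * b) * t) * wronskian f f' ρ ρ' t
  have hE : ∀ x ∈ Icc a m, HasDerivWithinAt E
      (exp (-(2 * b) * x) * (f x * (ρ'' x - 2 * b * ρ' x + q x * ρ x))) (Icc a m) x := by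
    intro x hx
    have hexp : HasDerivAt (fun t => exp (-(2 * b) * t)) (exp (-(2 * b) * x) * (-(2 * b))) x := by
      simpa using ((hasDerivAt_id x).const_mul (-(2 * b))).exp
    refine (hexp.hasDerivWithinAt.mul
      ((hf x hx).wronskian (hf' x hx) (hρ x hx) (hρ' x hx))).congr_deriv ?_
    simp only [_root_.wronskian]
    linear_combination (-(exp (-(2 * b) * x) * ρ x)) * hsol x hx
  have hmono : MonotoneOn E (Icc a m) :=
    monotoneOn_of_hasDerivWithinAt_nonneg (convex_Icc a m)
      (fun x hx => (hE x hx).continuousWithinAt)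
      (fun x hx => (hE x (interior_subset hx)).mono interior_subset)
      (fun x hx => by
        rw [interior_Icc] at hx
        exact mul_nonneg (exp_pos _).le (mul_nonneg (hf_nonneg x hx) (hsuper x hx)))
  intro x hx
  have hEa : 0 ≤ E a := mul_nonneg (exp_pos _).le h₀
  exact (mul_nonneg_iff_of_pos_left (exp_pos _)).1
    (hEa.trans (hmono (left_mem_Icc.2 (hx.1.trans hx.2)) hx hx.1))

theorem div_mul_le_of_wronskian_nonneg (ham : a < m)
    (hf : ∀ x ∈ Icc a m, HasDerivWithinAt f (f' x) (Icc a m) x)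
    (hρ : ∀ x ∈ Icc a m, HasDerivWithinAt ρ (ρ' x) (Icc a m) x)
    (hf_pos : ∀ x ∈ Ico a m, 0 < f x) (hW : ∀ x ∈ Ioo a m, 0 ≤ wronskian f f' ρ ρ' x) :
    ∀ x ∈ Icc a m, ρ a / f a * f x ≤ ρ x := by
  have hIco : Ico a m ⊆ Icc a m := Ico_subset_Icc_self
  have hf_cont : ContinuousOn f (Icc a m) := fun x hx => (hf x hx).continuousWithinAt
  have hρ_cont : ContinuousOn ρ (Icc a m) := fun x hx => (hρ x hx).continuousWithinAt
  have hmono : MonotoneOn (fun x => ρ x / f x) (Ico a m) := by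
    refine monotoneOn_of_hasDerivWithinAt_nonneg (f' := fun x => wronskian f f' ρ ρ' x / f x ^ 2)
      (convex_Ico a m) ((hρ_cont.mono hIco).div (hf_cont.mono hIco) fun x hx => (hf_pos x hx).ne')
      (fun x hx => ?_) (fun x hx => ?_) <;> simp only [interior_Ico] at hx ⊢
    · have hx' : x ∈ Icc a m := ⟨hx.1.le, hx.2.le⟩
      refine (((hρ x hx').div (hf x hx') (hf_pos x (Ioo_subset_Ico_self hx)).ne').mono
        (Ioo_subset_Ico_self.trans hIco)).congr_deriv ?_
      simp only [_root_.wronskian]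
      ring
    · exact div_nonneg (hW x hx) (sq_nonneg _)
  have hle : ∀ x ∈ Ico a m, ρ a / f a * f x ≤ ρ x := fun x hx =>
    (le_div_iff₀ (hf_pos x hx)).1 (hmono (left_mem_Ico.2 ham) hx hx.1)
  intro x hx
  exact ContinuousWithinAt.closure_le ((closure_Ico ham.ne).symm ▸ hx)
    (((hf_cont x hx).const_mul _).mono hIco) ((hρ_cont x hx).mono hIco) hle

end Wronskian

section DampedOscillator

variable (b ω t₀ s : ℝ)

noncomputable def dampedSin (t : ℝ) : ℝ := exp (b * (t - t₀)) * sin (ω * (s - t))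

noncomputable def dampedCos (t : ℝ) : ℝ := exp (b * (t - t₀)) * cos (ω * (s - t))

variable {b ω t₀ s}

theorem hasDerivAt_dampedSin (t : ℝ) :
    HasDerivAt (dampedSin b ω t₀ s) (b * dampedSin b ω t₀ s t - ω * dampedCos b ω t₀ s t) t := by
  have hexp : HasDerivAt (fun t => exp (b * (t - t₀))) (exp (b * (t - t₀)) * b) t := by
    simpa using (((hasDerivAt_id t).sub_const t₀).const_mul b).exp
  have harg : HasDerivAt (fun t => ω * (s - t)) (-ω) t := by
    simpa using ((hasDerivAt_id t).const_sub s).const_mul ω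
  exact (hexp.mul harg.sin).congr_deriv (by simp only [dampedSin, dampedCos]; ring)

theorem hasDerivAt_dampedCos (t : ℝ) :
    HasDerivAt (dampedCos b ω t₀ s) (b * dampedCos b ω t₀ s t + ω * dampedSin b ω t₀ s t) t := by
  have hexp : HasDerivAt (fun t => exp (b * (t - t₀))) (exp (b * (t - t₀)) * b) t := by
    simpa using (((hasDerivAt_id t).sub_const t₀).const_mul b).exp
  have harg : HasDerivAt (fun t => ω * (s - t)) (-ω) t := by
    simpa using ((hasDerivAt_id t).const_sub s).const_mul ω
  exact (hexp.mul harg.cos).congr_deriv (by simp only [dampedSin, dampedCos]; ring)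

theorem dampedSin_pos (hω : 0 < ω) {t : ℝ} (hts : t < s) (hπ : ω * (s - t) < π) :
    0 < dampedSin b ω t₀ s t :=
  mul_pos (exp_pos _) (sin_pos_of_pos_of_lt_pi (mul_pos hω (sub_pos.2 hts)) hπ)

theorem div_mul_dampedSin_le_of_supersolution {a m : ℝ} {ρ ρ' ρ'' : ℝ → ℝ} (hω : 0 < ω)
    (ham : a < m) (hms : m ≤ s) (hπ : ω * (s - a) < π)
    (hρ : ∀ x ∈ Icc a m, HasDerivWithinAt ρ (ρ' x) (Icc a m) x)
    (hρ' : ∀ x ∈ Icc a m, HasDerivWithinAt ρ' (ρ'' x) (Icc a m) x)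
    (hsuper : ∀ x ∈ Ioo a m, 0 ≤ ρ'' x - 2 * b * ρ' x + (b ^ 2 + ω ^ 2) * ρ x)
    (h₀ : 0 ≤ sin (ω * (s - a)) * ρ' a - (b * sin (ω * (s - a)) - ω * cos (ω * (s - a))) * ρ a) :
    ∀ x ∈ Icc a m, ρ a / sin (ω * (s - a)) * dampedSin b ω a s x ≤ ρ x := by
  set u := dampedSin b ω a s
  set u' := fun t => b * u t - ω * dampedCos b ω a s t
  have hu : ∀ t, HasDerivAt u (u' t) t := hasDerivAt_dampedSin
  have hu' : ∀ t, HasDerivAt u' (b * u' t - ω * (b * dampedCos b ω a s t + ω * u t)) t :=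
    fun t => ((hu t).const_mul b).sub ((hasDerivAt_dampedCos t).const_mul ω)
  have hua : u a = sin (ω * (s - a)) := by simp [u, dampedSin]
  have hpos : ∀ x ∈ Ico a m, 0 < u x := fun x hx =>
    dampedSin_pos hω (hx.2.trans_le hms) (lt_of_le_of_lt (by nlinarith [hx.1]) hπ)
  have hW := wronskian_nonneg_of_supersolution (q := fun _ => b ^ 2 + ω ^ 2)
    (fun x _ => (hu x).hasDerivWithinAt) (fun x _ => (hu' x).hasDerivWithinAt) hρ hρ'
    (fun x _ => by simp only [u']; ring) hsuper (fun x hx => (hpos x (Ioo_subset_Ico_self hx)).le)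
    (by simpa [_root_.wronskian, hua, u', dampedCos] using h₀)
  rw [← hua]
  exact div_mul_le_of_wronskian_nonneg ham (fun x _ => (hu x).hasDerivWithinAt) hρ hpos
    fun x hx => hW x (Ioo_subset_Icc_self hx)

end DampedOscillator

theorem sin_eq_sqrt_sq_sub_sq_div {b c W : ℝ} (hc : 0 < c) (hW₀ : 0 ≤ W) (hWπ : W ≤ π)
    (hcos : cos W = b / c) : sin W = √(c ^ 2 - b ^ 2) / c := by
  rw [sin_eq_sqrt_one_sub_cos_sq hW₀ hWπ, hcos, ← sqrt_sq hc.le, ← sqrt_div', sqrt_sq hc.le]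
  · congr 1
    field_simp
  · positivity

theorem sturm_comparison_lower_decreasing_general
    (b c W : ℝ) (hb : 0 ≤ b) (hbc : b < c)
    (hW : W ∈ Set.Ioc 0 (π / 2)) (hcosW : Real.cos W = b / c)
    (ω : ℝ) (hω : ω = Real.sqrt (c ^ 2 - b ^ 2))
    (Tm : ℝ) (hTm : Tm = W / ω)
    (T₁ T : ℝ) (hT : T₁ < T)
    (ρ ρ' ρ'' : ℝ → ℝ)
    (hd1 : ∀ t ∈ Set.Icc T₁ T, HasDerivWithinAt ρ (ρ' t) (Set.Icc T₁ T) t)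
    (hd2 : ∀ t ∈ Set.Icc T₁ T, HasDerivWithinAt ρ' (ρ'' t) (Set.Icc T₁ T) t)
    (h1 : 0 < ρ T₁) (h1' : ρ' T₁ = 0)
    (hineq : ∀ τ ∈ Set.Icc T₁ T, 0 ≤ ρ'' τ - 2 * b * ρ' τ + c ^ 2 * ρ τ) :
    (∀ τ ∈ Set.Icc T₁ (min T (T₁ + Tm)),
        ρ T₁ * (c / ω) * Real.exp (b * (τ - T₁)) *
            Real.sin (ω * (T₁ + Tm - τ)) ≤ ρ τ) ∧
      (ρ T = 0 → T₁ + Tm ≤ T) := by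
  have hc : 0 < c := hb.trans_lt hbc
  have hωpos : 0 < ω := hω ▸ sqrt_pos.2 (by nlinarith)
  have hc2 : c ^ 2 = b ^ 2 + ω ^ 2 := by rw [hω, sq_sqrt (by nlinarith)]; ring
  have hWπ : W < π := by linarith [hW.2, pi_pos]
  have hsinW : sin W = ω / c := hω ▸ sin_eq_sqrt_sq_sub_sq_div hc hW.1.le hWπ.le hcosW
  have hωW : ω * (T₁ + Tm - T₁) = W := by rw [hTm]; field_simp; ring
  have hTm_pos : 0 < Tm := hTm ▸ div_pos hW.1 hωpos
  set m := min T (T₁ + Tm)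
  have hm : T₁ < m := lt_min hT (by linarith)
  have hsub : Icc T₁ m ⊆ Icc T₁ T := Icc_subset_Icc_right (min_le_left _ _)
  have hcomp := div_mul_dampedSin_le_of_supersolution hωpos hm (min_le_right _ _) (hωW ▸ hWπ)
    (fun x hx => (hd1 x (hsub hx)).mono hsub) (fun x hx => (hd2 x (hsub hx)).mono hsub)
    (fun x hx => hc2 ▸ hineq x (hsub (Ioo_subset_Icc_self hx)))
    (by rw [h1', hωW, hsinW, hcosW, mul_div_left_comm]; simp)
  rw [hωW, hsinW, div_div_eq_mul_div, mul_div_assoc] at hcomp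
  refine ⟨fun τ hτ => by simpa only [dampedSin, mul_assoc] using hcomp τ hτ, fun hρT => ?_⟩
  by_contra! hTlt
  have hmT : m = T := min_eq_left hTlt.le
  have hu : 0 < dampedSin b ω T₁ (T₁ + Tm) T :=
    dampedSin_pos hωpos hTlt (lt_of_le_of_lt (by nlinarith) (hωW ▸ hWπ))
  have hle := hcomp T (hmT ▸ right_mem_Icc.2 hm.le)
  have hlower : 0 < ρ T₁ * (c / ω) * dampedSin b ω T₁ (T₁ + Tm) T := by positivity
  linarith

/-- Lower Sturm comparison, decreasing phase: a `C²` function `ρ` on `[T₁, T]` with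
`ρ(T₁) > 0`, `ρ'(T₁) = 0`, `ρ > 0` on `[T₁, T)`, and `ρ'' - 2b·ρ' + c²·ρ ≥ 0` on
`[T₁, T]` dominates the explicit oscillator solution
`ρ(T₁)·(c/ω)·e^{b(τ-T₁)}·sin(ω(T₁+T₋-τ))` on `[T₁, min(T, T₁+T₋)]`, where
`T₋ = W₋(b,c)/ω`; in particular, if `ρ(T) = 0` then `T ≥ T₁ + T₋`. -/
theorem sturm_comparison_lower_decreasing
    (b c W : ℝ) (hb : 0 ≤ b) (hbc : b < c)
    (hW : W ∈ Set.Ioc 0 (π / 2)) (hcosW : Real.cos W = b / c)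
    (ω : ℝ) (hω : ω = Real.sqrt (c ^ 2 - b ^ 2))
    (Tm : ℝ) (hTm : Tm = W / ω)
    (T₁ T : ℝ) (hT : T₁ < T)
    (ρ ρ' ρ'' : ℝ → ℝ)
    (hd1 : ∀ t ∈ Set.Icc T₁ T, HasDerivWithinAt ρ (ρ' t) (Set.Icc T₁ T) t)
    (hd2 : ∀ t ∈ Set.Icc T₁ T, HasDerivWithinAt ρ' (ρ'' t) (Set.Icc T₁ T) t)
    (hcont : ContinuousOn ρ'' (Set.Icc T₁ T))
    (h1 : 0 < ρ T₁) (h1' : ρ' T₁ = 0)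
    (hpos : ∀ τ ∈ Set.Ico T₁ T, 0 < ρ τ)
    (hineq : ∀ τ ∈ Set.Icc T₁ T, 0 ≤ ρ'' τ - 2 * b * ρ' τ + c ^ 2 * ρ τ) :
    (∀ τ ∈ Set.Icc T₁ (min T (T₁ + Tm)),
        ρ T₁ * (c / ω) * Real.exp (b * (τ - T₁)) *
            Real.sin (ω * (T₁ + Tm - τ)) ≤ ρ τ) ∧
      (ρ T = 0 → T₁ + Tm ≤ T) :=
  sturm_comparison_lower_decreasing_general b c W hb hbc hW hcosW ω hω Tm hTm T₁ T hT ρ ρ' ρ'' hd1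
    hd2 h1 h1' hineq
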